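/- Let g, g̃ ∈ ℝ^{r−1} be FIR coefficient vectors with δ := g − g̃, and suppose the system response Θ̃ = {R̃, M̃, Ñ, L̃} satisfies the SLS constraints for the estimated plant (Z, e₁, g̃ᵀ), with R̃ invertible as a rational matrix. If ‖Ñδᵀ‖ < 1 in H∞ norm, then the controller K̃ = L̃ − M̃R̃⁻¹Ñ internally stabilizes the true plant (Z, e₁, gᵀ) and achieves on it the closed-loop response Θ̂ given by [[R̂, N̂],[M̂, L̂]] = [[R̃, Ñ],[M̃, L̃]] + (1 − δᵀÑ)⁻¹·[Ñδᵀ; L̃δᵀ]·[R̃, Ñ]. -/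

import Mathlib

/- Preliminaries: transfer functions as real rational functions, RH∞, H∞ norms,
   System-Level Synthesis (SLS) constraints, controllers, closed-loop responses,
   coarse-grained identification, Gaussian vectors. -/

noncomputable section
open scoped Matrix BigOperators ENNReal
open MeasureTheory ProbabilityTheory Polynomial

namespace SLS

/-- Scalar transfer functions: real rational functions in `z`. -/
abbrev TF : Type := RatFunc ℝ

/-- Transfer matrices. -/
abbrev TMat (m n : ℕ) : Type := Matrix (Fin m) (Fin n) TF

/-- Embed a real matrix as a (constant) transfer matrix. -/
def rmap {m n : ℕ} (A : Matrix (Fin m) (Fin n) ℝ) : TMat m n := A.map RatFunc.C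

/-- Evaluate a scalar transfer function at a complex point. -/
def evalTF (f : TF) (z : ℂ) : ℂ :=
  (f.num.map (algebraMap ℝ ℂ)).eval z / (f.denom.map (algebraMap ℝ ℂ)).eval z

/-- Evaluate a transfer matrix at a complex point. -/
def evalMat {m n : ℕ} (F : TMat m n) (z : ℂ) : Matrix (Fin m) (Fin n) ℂ :=
  Matrix.of fun i j => evalTF (F i j) z

/-- Spectral norm (ℓ2 → ℓ2 operator norm) of a matrix over `ℝ` or `ℂ`. -/
def specNorm {𝕜 : Type} [RCLike 𝕜] {m n : ℕ} (M : Matrix (Fin m) (Fin n) 𝕜) : ℝ :=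
  ‖LinearMap.toContinuousLinearMap (Matrix.toEuclideanLin M)‖

/-- H∞ norm of a transfer matrix: sup over the unit circle of the spectral norm. -/
def hinfNorm {m n : ℕ} (F : TMat m n) : ℝ :=
  sSup {x : ℝ | ∃ z : ℂ, ‖z‖ = 1 ∧ x = specNorm (evalMat F z)}

/-- H∞ norm of a scalar transfer function. -/
def hinfNormTF (f : TF) : ℝ :=
  sSup {x : ℝ | ∃ z : ℂ, ‖z‖ = 1 ∧ x = ‖evalTF f z‖}

/-- A scalar transfer function is proper if its numerator degree does not exceed
its denominator degree. -/
def ProperTF (f : TF) : Prop := f.num.degree ≤ f.denom.degree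

/-- Strictly proper: vanishes at `z = ∞`. -/
def StrictlyProperTF (f : TF) : Prop := f.num.degree < f.denom.degree

/-- Stable: all poles lie strictly inside the open unit disk. -/
def StableTF (f : TF) : Prop :=
  ∀ z : ℂ, (f.denom.map (algebraMap ℝ ℂ)).eval z = 0 → ‖z‖ < 1

/-- Membership in RH∞ for scalar transfer functions: proper and stable. -/
def MemRHinfTF (f : TF) : Prop := ProperTF f ∧ StableTF f

/-- Membership in RH∞ for transfer matrices (entrywise). -/
def MemRHinf {m n : ℕ} (F : TMat m n) : Prop := ∀ i j, MemRHinfTF (F i j)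

/-- Strict properness of a transfer matrix (entrywise). -/
def StrictlyProper {m n : ℕ} (F : TMat m n) : Prop := ∀ i j, StrictlyProperTF (F i j)

/-- The transfer matrix `zI - A` for a real matrix `A`. -/
def zIA {n : ℕ} (A : Matrix (Fin n) (Fin n) ℝ) : TMat n n :=
  Matrix.diagonal (fun _ => (RatFunc.X : TF)) - rmap A

/-- A system response `Θ = {R, M, N, L}` for a plant with `n` states, `p` control
inputs and `q` measured outputs. -/
structure Response (n p q : ℕ) where
  R : TMat n n
  M : TMat p n
  N : TMat n q
  L : TMat p q

/-- The stability part of the SLS constraints: `R, M, N` strictly proper in RH∞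
and `L ∈ RH∞`. -/
def SLSStable {n p q : ℕ} (Θ : Response n p q) : Prop :=
  StrictlyProper Θ.R ∧ StrictlyProper Θ.M ∧ StrictlyProper Θ.N ∧
  MemRHinf Θ.R ∧ MemRHinf Θ.M ∧ MemRHinf Θ.N ∧ MemRHinf Θ.L

/-- The SLS constraints for the plant `(A, B₂, C₂)`:
`[zI − A, −B₂]·[[R, N],[M, L]] = [I, 0]`, `[[R, N],[M, L]]·[zI − A; −C₂] = [I; 0]`,
written blockwise, together with the stability conditions. -/
def SLSConstraints {n p q : ℕ} (A : Matrix (Fin n) (Fin n) ℝ)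
    (B₂ : Matrix (Fin n) (Fin p) ℝ) (C₂ : Matrix (Fin q) (Fin n) ℝ)
    (Θ : Response n p q) : Prop :=
  zIA A * Θ.R - rmap B₂ * Θ.M = 1 ∧
  zIA A * Θ.N - rmap B₂ * Θ.L = 0 ∧
  Θ.R * zIA A - Θ.N * rmap C₂ = 1 ∧
  Θ.M * zIA A - Θ.L * rmap C₂ = 0 ∧
  SLSStable Θ

/-- The robust SLS constraints with perturbations `(Δ₁, Δ₂)`: the second block
equation becomes `[[R, N],[M, L]]·[zI − A; −C₂] = [I + Δ₁; Δ₂]`. -/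
def RobustSLSConstraints {n p q : ℕ} (A : Matrix (Fin n) (Fin n) ℝ)
    (B₂ : Matrix (Fin n) (Fin p) ℝ) (C₂ : Matrix (Fin q) (Fin n) ℝ)
    (Δ₁ : TMat n n) (Δ₂ : TMat p n) (Θ : Response n p q) : Prop :=
  zIA A * Θ.R - rmap B₂ * Θ.M = 1 ∧
  zIA A * Θ.N - rmap B₂ * Θ.L = 0 ∧
  Θ.R * zIA A - Θ.N * rmap C₂ = 1 + Δ₁ ∧
  Θ.M * zIA A - Θ.L * rmap C₂ = Δ₂ ∧
  SLSStable Θ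

/-- The controller `K = L − M R⁻¹ N` induced by a system response. -/
def controller {n p q : ℕ} (Θ : Response n p q) : TMat p q :=
  Θ.L - Θ.M * Θ.R⁻¹ * Θ.N

/-- `K` achieves the closed-loop response `Θ'` on the plant `(A, B₂, C₂)`: in the
feedback loop `x = (zI − A)⁻¹(B₂u + δx)`, `y = C₂x + δy`, `u = Ky`, the transfer
matrices from `(δx, δy)` to `(x, u)` equal `[[R', N'],[M', L']]`. -/
def Achieves {n p q : ℕ} (A : Matrix (Fin n) (Fin n) ℝ)
    (B₂ : Matrix (Fin n) (Fin p) ℝ) (C₂ : Matrix (Fin q) (Fin n) ℝ)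
    (K : TMat p q) (Θ' : Response n p q) : Prop :=
  zIA A * Θ'.R = rmap B₂ * Θ'.M + 1 ∧
  zIA A * Θ'.N = rmap B₂ * Θ'.L ∧
  Θ'.M = K * rmap C₂ * Θ'.R ∧
  Θ'.L = K * rmap C₂ * Θ'.N + K

/-- `K` internally stabilizes the plant `(A, B₂, C₂)`: the four closed-loop
transfer matrices exist, `R', M', N'` are strictly proper, and all four lie in RH∞. -/
def InternallyStabilizes {n p q : ℕ} (A : Matrix (Fin n) (Fin n) ℝ)
    (B₂ : Matrix (Fin n) (Fin p) ℝ) (C₂ : Matrix (Fin q) (Fin n) ℝ)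
    (K : TMat p q) : Prop :=
  ∃ Θ' : Response n p q, Achieves A B₂ C₂ K Θ' ∧ SLSStable Θ'

/-! ### FIR SISO plants -/

/-- The down-shift matrix (ones on the subdiagonal). -/
def shiftMat (n : ℕ) : Matrix (Fin n) (Fin n) ℝ :=
  Matrix.of fun i j => if (i : ℕ) = (j : ℕ) + 1 then 1 else 0

/-- The first standard basis vector, as a column matrix. -/
def e1 (n : ℕ) : Matrix (Fin n) (Fin 1) ℝ :=
  Matrix.of fun i _ => if (i : ℕ) = 0 then 1 else 0

/-- A vector as a row matrix (`gᵀ`). -/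
def rowVec {n : ℕ} (g : Fin n → ℝ) : Matrix (Fin 1) (Fin n) ℝ :=
  Matrix.of fun _ j => g j

/-- The matrix `C₁ = [gᵀ; 0]`. -/
def C1mat {n : ℕ} (g : Fin n → ℝ) : Matrix (Fin 2) (Fin n) ℝ :=
  Matrix.of fun i j => if (i : ℕ) = 0 then g j else 0

/-- The matrix `D₁₂ = [0; 1]`. -/
def D12mat : Matrix (Fin 2) (Fin 1) ℝ :=
  Matrix.of fun i _ => if (i : ℕ) = 1 then 1 else 0

/-- Stack two scalar transfer functions into a 2×1 transfer matrix `[a; b]`. -/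
def col2 (a b : TF) : TMat 2 1 :=
  Matrix.of fun i _ => if (i : ℕ) = 0 then a else b

/-- The H∞ cost `J(g, Θ) = ‖[C₁, D₁₂]·[[R, N],[M, L]]·[B₁; D₂₁] + D₁₁‖` of a
system response for the generalized plant built from FIR coefficients `g`. -/
def cost {n nw : ℕ} (g : Fin n → ℝ) (B₁ : Matrix (Fin n) (Fin nw) ℝ)
    (D₂₁ : Matrix (Fin 1) (Fin nw) ℝ) (D₁₁ : Matrix (Fin 2) (Fin nw) ℝ)
    (Θ : Response n 1 1) : ℝ :=
  hinfNorm ((rmap (C1mat g) * Θ.R + rmap D12mat * Θ.M) * rmap B₁ +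
    (rmap (C1mat g) * Θ.N + rmap D12mat * Θ.L) * rmap D₂₁ + rmap D₁₁)

/-- The transfer matrix `[1 + g̃ᵀÑ; L̃]` and its H∞ norm. -/
def perfWeight {n : ℕ} (g : Fin n → ℝ) (Θ : Response n 1 1) : ℝ :=
  hinfNorm (col2 (1 + (rmap (rowVec g) * Θ.N) 0 0) (Θ.L 0 0))

/-- The robust SLS objective `Q(g̃, Θ̃, α) = J(g̃, Θ̃) + εα‖R̃B₁ + ÑD₂₁‖`. -/
def Qval {n nw : ℕ} (g : Fin n → ℝ) (B₁ : Matrix (Fin n) (Fin nw) ℝ)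
    (D₂₁ : Matrix (Fin 1) (Fin nw) ℝ) (D₁₁ : Matrix (Fin 2) (Fin nw) ℝ)
    (ε : ℝ) (Θ : Response n 1 1) (α : ℝ) : ℝ :=
  cost g B₁ D₂₁ D₁₁ Θ + ε * α * hinfNorm (Θ.R * rmap B₁ + Θ.N * rmap D₂₁)

/-- Feasibility for the robust SLS problem for the estimate `g̃` with uncertainty
parameter `ε`: `α > 0`, `Θ̃` satisfies the SLS constraints for `(Z, e₁, g̃ᵀ)`, and
`εα‖Ñ‖ + ‖[1 + g̃ᵀÑ; L̃]‖ ≤ α`. -/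
def RobustFeasible {n : ℕ} (g : Fin n → ℝ) (ε : ℝ) (Θ : Response n 1 1) (α : ℝ) : Prop :=
  0 < α ∧ SLSConstraints (shiftMat n) (e1 n) (rowVec g) Θ ∧
  ε * α * hinfNorm Θ.N + perfWeight g Θ ≤ α

/-- `(Θ̃, α)` is a minimizer of the robust SLS problem for `g̃`. -/
def RobustOptimal {n nw : ℕ} (g : Fin n → ℝ) (B₁ : Matrix (Fin n) (Fin nw) ℝ)
    (D₂₁ : Matrix (Fin 1) (Fin nw) ℝ) (D₁₁ : Matrix (Fin 2) (Fin nw) ℝ)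
    (ε : ℝ) (Θ : Response n 1 1) (α : ℝ) : Prop :=
  RobustFeasible g ε Θ α ∧
  ∀ Θ' α', RobustFeasible g ε Θ' α' → Qval g B₁ D₂₁ D₁₁ ε Θ α ≤ Qval g B₁ D₂₁ D₁₁ ε Θ' α'

/-- `Θ₀` is a minimizer of `J(g, ·)` over responses satisfying the SLS constraints
for the plant `(Z, e₁, gᵀ)`. -/
def OptimalResponse {n nw : ℕ} (g : Fin n → ℝ) (B₁ : Matrix (Fin n) (Fin nw) ℝ)
    (D₂₁ : Matrix (Fin 1) (Fin nw) ℝ) (D₁₁ : Matrix (Fin 2) (Fin nw) ℝ)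
    (Θ : Response n 1 1) : Prop :=
  SLSConstraints (shiftMat n) (e1 n) (rowVec g) Θ ∧
  ∀ Θ', SLSConstraints (shiftMat n) (e1 n) (rowVec g) Θ' →
    cost g B₁ D₂₁ D₁₁ Θ ≤ cost g B₁ D₂₁ D₁₁ Θ'

/-- The FIR transfer function `G(z) = Σ_{t=1}^{r−1} g_t z^{−t}` for
`g = (g₁, …, g_{r−1})`. -/
def firTF {n : ℕ} (g : Fin n → ℝ) : TF :=
  ∑ t : Fin n, RatFunc.C (g t) * (RatFunc.X)⁻¹ ^ ((t : ℕ) + 1)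

/-- The FIR transfer function `G(z) = Σ_{k=0}^{T−1} g_k z^{−k}` for a full
impulse-response vector `g_{0:T−1}`. -/
def firTF0 {T : ℕ} (g : Fin T → ℝ) : TF :=
  ∑ k : Fin T, RatFunc.C (g k) * (RatFunc.X)⁻¹ ^ (k : ℕ)

/-! ### Coarse-grained identification -/

/-- Euclidean (ℓ2) norm of a finite real vector. -/
def euclNorm {r : ℕ} (x : Fin r → ℝ) : ℝ := Real.sqrt (∑ i, x i ^ 2)

/-- ℓp norm of a finite real vector, `p ∈ [1, ∞]`. -/
def lpNorm {T : ℕ} (p : ℝ≥0∞) (x : Fin T → ℝ) : ℝ :=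
  if p = ∞ then ⨆ i, |x i| else (∑ i, |x i| ^ p.toReal) ^ (1 / p.toReal)

/-- `r^{2/max(p,2)}` as a real number. -/
def rExp (p : ℝ≥0∞) (r : ℕ) : ℝ := (r : ℝ) ^ ((2 / max p 2).toReal)

/-- The T×T lower-triangular Toeplitz matrix whose first column is `u`. -/
def toep {T : ℕ} (u : Fin T → ℝ) : Matrix (Fin T) (Fin T) ℝ :=
  Matrix.of fun i j =>
    if (j : ℕ) ≤ (i : ℕ) then u ⟨(i : ℕ) - (j : ℕ), lt_of_le_of_lt (Nat.sub_le _ _) i.isLt⟩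
    else 0

/-- The stacked input matrix `Z_mat = [Toep(u₁); …; Toep(u_m)]`. -/
def Zmat {T mE : ℕ} (u : Fin mE → Fin T → ℝ) : Matrix (Fin mE × Fin T) (Fin T) ℝ :=
  Matrix.of fun pr j => toep (u pr.1) pr.2 j

/-- `Z_matᵀ Z_mat`. -/
def ZtZ {T mE : ℕ} (u : Fin mE → Fin T → ℝ) : Matrix (Fin T) (Fin T) ℝ :=
  (Zmat u)ᵀ * Zmat u

/-- The least-squares estimate `g̃_{0:T−1} = (Z_matᵀZ_mat)⁻¹Z_matᵀ(y₁; …; y_m)`. -/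
def lsEst {T mE : ℕ} (u : Fin mE → Fin T → ℝ) (y : Fin mE → Fin T → ℝ) : Fin T → ℝ :=
  ((ZtZ u)⁻¹ * (Zmat u)ᵀ).mulVec fun pr => y pr.1 pr.2

/-- Pad the FIR coefficients `g = (g₁, …, g_{r−1})` to the impulse response
`g_{0:T−1} = (0, g₁, …, g_{r−1}, 0, …, 0)`. -/
def pad {r T : ℕ} (_ : r ≤ T) (g : Fin (r - 1) → ℝ) : Fin T → ℝ := fun k =>
  if hk : 1 ≤ (k : ℕ) ∧ (k : ℕ) < r then g ⟨(k : ℕ) - 1, by omega⟩ else 0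

/-- The estimated FIR coefficients `g̃ = (g̃₁, …, g̃_{r−1})` from coarse-grained
identification with true coefficients `g` and additive noise on the outputs. -/
def coarseEst {r T mE : ℕ} (hrT : r ≤ T) (u : Fin mE → Fin T → ℝ)
    (g : Fin (r - 1) → ℝ) (noise : Fin mE → Fin T → ℝ) : Fin (r - 1) → ℝ :=
  fun i =>
    lsEst u (fun k => (toep (u k)).mulVec (pad hrT g) + noise k)
      ⟨(i : ℕ) + 1, by have := i.isLt; omega⟩

/-! ### Gaussian random vectors -/

/-- The standard Gaussian measure on `Fin r → ℝ` (i.i.d. `N(0,1)` coordinates). -/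
def stdGaussianPi (r : ℕ) : Measure (Fin r → ℝ) :=
  Measure.pi fun _ => gaussianReal 0 1

/-- `δ` is a centered Gaussian random vector with covariance `Cov`: its law is the
pushforward of the standard Gaussian under some `A` with `AAᵀ = Cov`. -/
def IsCenteredGaussianVec {Ω : Type} [MeasurableSpace Ω] (P : Measure Ω) {r : ℕ}
    (δ : Ω → Fin r → ℝ) (Cov : Matrix (Fin r) (Fin r) ℝ) : Prop :=
  ∃ A : Matrix (Fin r) (Fin r) ℝ, A * Aᵀ = Cov ∧
    Measure.map δ P = Measure.map (fun x => A.mulVec x) (stdGaussianPi r)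

/-- The law of i.i.d. `N(0, σ²)` noise across `mE` experiments of length `T`. -/
def iidGaussianLaw (mE T : ℕ) (σ2 : ℝ) : Measure (Fin mE → Fin T → ℝ) :=
  Measure.pi fun _ => Measure.pi fun _ => gaussianReal 0 σ2.toNNReal


/-- Scalar multiplication of a transfer matrix by a scalar transfer function. -/
def sMulTF {m n : ℕ} (c : TF) (M : TMat m n) : TMat m n := Matrix.of fun i j => c * M i j

/-- The perturbed response `Θ̂` with `R̂ = (I+Δ₁)⁻¹R̃`, `M̂ = M̃ − Δ₂(I+Δ₁)⁻¹R̃`,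
`N̂ = (I+Δ₁)⁻¹Ñ`, `L̂ = L̃ − Δ₂(I+Δ₁)⁻¹Ñ` (with the rational matrix inverse). -/
def deltaPerturb {n p q : ℕ} (Δ₁ : TMat n n) (Δ₂ : TMat p n) (Θ : Response n p q) :
    Response n p q where
  R := (1 + Δ₁)⁻¹ * Θ.R
  M := Θ.M - Δ₂ * ((1 + Δ₁)⁻¹ * Θ.R)
  N := (1 + Δ₁)⁻¹ * Θ.N
  L := Θ.L - Δ₂ * ((1 + Δ₁)⁻¹ * Θ.N)

/-- The Sherman–Morrison form of the perturbed response in the FIR SISO case: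
`[[R̂, N̂],[M̂, L̂]] = [[R̃, Ñ],[M̃, L̃]] + (1 − δᵀÑ)⁻¹·[Ñδᵀ; L̃δᵀ]·[R̃, Ñ]`. -/
def smPerturb {n : ℕ} (δ : Fin n → ℝ) (Θ : Response n 1 1) : Response n 1 1 where
  R := Θ.R + sMulTF (1 - (rmap (rowVec δ) * Θ.N) 0 0)⁻¹ (Θ.N * rmap (rowVec δ) * Θ.R)
  M := Θ.M + sMulTF (1 - (rmap (rowVec δ) * Θ.N) 0 0)⁻¹ (Θ.L * rmap (rowVec δ) * Θ.R)
  N := Θ.N + sMulTF (1 - (rmap (rowVec δ) * Θ.N) 0 0)⁻¹ (Θ.N * rmap (rowVec δ) * Θ.N)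
  L := Θ.L + sMulTF (1 - (rmap (rowVec δ) * Θ.N) 0 0)⁻¹ (Θ.L * rmap (rowVec δ) * Θ.N)

/-- The block-diagonal matrix with `m` copies of `Toep(g)` on the diagonal
(the action of `Toep(g)` on the stacked process noise of `m` experiments). -/
def bigToep {T mE : ℕ} (g : Fin T → ℝ) : Matrix (Fin mE × Fin T) (Fin mE × Fin T) ℝ :=
  Matrix.of fun pr qr => if pr.1 = qr.1 then toep g pr.2 qr.2 else 0

end SLS

open SLS

/-! Write `η = δᵀÑ`, a scalar transfer function. Since the true output matrix is `g̃ᵀ + δᵀ`, the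
SLS constraints for the estimated plant and a Sherman–Morrison computation show that `K̃` achieves
`Θ̂` on the true plant; the only thing to invert is the scalar `1 − η`.

For stability, `η` is strictly proper and stable, and on the unit circle
`|η(z)| = |δᵀÑ(z)| ≤ ‖Ñ(z)δᵀ‖ ≤ ‖Ñδᵀ‖ < 1`, the middle step because `Ñ(z)δᵀ` has rank one.
The maximum modulus principle for `w ↦ η(1/w)` on the closed unit disk extends `|η| < 1` to all of
`|z| ≥ 1`, so `1 − η` has no zeros there, and `(1 − η)⁻¹ ∈ RH∞` (proper because `η(∞) = 0`).
Every block of `Θ̂` is then a sum of products of `Θ̃`, constants and `(1 − η)⁻¹`, which preserve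
the SLS stability conditions. -/

namespace SLS

theorem properTF_iff_intDegree_nonpos {f : TF} : ProperTF f ↔ f.intDegree ≤ 0 := by
  rcases eq_or_ne f 0 with rfl | hf
  · simp [ProperTF]
  rw [ProperTF, RatFunc.intDegree, degree_eq_natDegree (RatFunc.num_ne_zero hf),
    degree_eq_natDegree f.denom_ne_zero, Nat.cast_le]
  omega

theorem strictlyProperTF_iff {f : TF} : StrictlyProperTF f ↔ f = 0 ∨ f.intDegree < 0 := by
  rcases eq_or_ne f 0 with rfl | hf
  · simp [StrictlyProperTF]
  rw [StrictlyProperTF, RatFunc.intDegree, degree_eq_natDegree (RatFunc.num_ne_zero hf),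
    degree_eq_natDegree f.denom_ne_zero, Nat.cast_lt]
  simp only [hf, false_or]
  omega

theorem strictlyProperTF_zero : StrictlyProperTF 0 := strictlyProperTF_iff.2 (.inl rfl)

theorem not_strictlyProperTF_one : ¬ StrictlyProperTF 1 := by
  simp [strictlyProperTF_iff]

theorem StrictlyProperTF.properTF {f : TF} (hf : StrictlyProperTF f) : ProperTF f := hf.le

theorem properTF_C (c : ℝ) : ProperTF (RatFunc.C c) := properTF_iff_intDegree_nonpos.2 (by simp)

theorem ProperTF.add {f g : TF} (hf : ProperTF f) (hg : ProperTF g) : ProperTF (f + g) := by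
  rcases eq_or_ne g 0 with rfl | hg0
  · simpa using hf
  rcases eq_or_ne (f + g) 0 with h0 | h0
  · exact h0 ▸ strictlyProperTF_zero.properTF
  rw [properTF_iff_intDegree_nonpos] at *
  exact (RatFunc.intDegree_add_le hg0 h0).trans (max_le hf hg)

theorem ProperTF.mul {f g : TF} (hf : ProperTF f) (hg : ProperTF g) : ProperTF (f * g) := by
  rcases eq_or_ne f 0 with rfl | hf0
  · simpa using strictlyProperTF_zero.properTF
  rcases eq_or_ne g 0 with rfl | hg0
  · simpa using strictlyProperTF_zero.properTF
  rw [properTF_iff_intDegree_nonpos] at *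
  rw [RatFunc.intDegree_mul hf0 hg0]
  omega

theorem StrictlyProperTF.add {f g : TF} (hf : StrictlyProperTF f) (hg : StrictlyProperTF g) :
    StrictlyProperTF (f + g) := by
  rcases eq_or_ne f 0 with rfl | hf0
  · simpa using hg
  rcases eq_or_ne g 0 with rfl | hg0
  · simpa using hf
  rcases eq_or_ne (f + g) 0 with h0 | h0
  · exact h0 ▸ strictlyProperTF_zero
  refine strictlyProperTF_iff.2 (.inr ((RatFunc.intDegree_add_le hg0 h0).trans_lt ?_))
  exact max_lt ((strictlyProperTF_iff.1 hf).resolve_left hf0)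
    ((strictlyProperTF_iff.1 hg).resolve_left hg0)

theorem ProperTF.mul_strictlyProperTF {f g : TF} (hf : ProperTF f) (hg : StrictlyProperTF g) :
    StrictlyProperTF (f * g) := by
  rcases eq_or_ne f 0 with rfl | hf0
  · simpa using strictlyProperTF_zero
  rcases eq_or_ne g 0 with rfl | hg0
  · simpa using strictlyProperTF_zero
  refine strictlyProperTF_iff.2 (.inr ?_)
  rw [RatFunc.intDegree_mul hf0 hg0]
  have := properTF_iff_intDegree_nonpos.1 hf
  have := (strictlyProperTF_iff.1 hg).resolve_left hg0
  omega

theorem StrictlyProperTF.mul_properTF {f g : TF} (hf : StrictlyProperTF f) (hg : ProperTF g) :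
    StrictlyProperTF (f * g) :=
  mul_comm g f ▸ hg.mul_strictlyProperTF hf

theorem strictlyProperTF_sum {ι : Type*} (s : Finset ι) {f : ι → TF}
    (hf : ∀ i ∈ s, StrictlyProperTF (f i)) : StrictlyProperTF (∑ i ∈ s, f i) :=
  Finset.sum_induction f _ (fun _ _ => .add) strictlyProperTF_zero hf

theorem StableTF.of_denom_dvd_mul {f g h : TF} (hg : StableTF g) (hh : StableTF h)
    (hd : f.denom ∣ g.denom * h.denom) : StableTF f := by
  intro z hz
  rw [← eval₂_eq_eval_map] at hz
  have := eval₂_eq_zero_of_dvd_of_eval₂_eq_zero _ _ hd hz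
  rw [eval₂_mul, mul_eq_zero, eval₂_eq_eval_map, eval₂_eq_eval_map] at this
  exact this.elim (hg z) (hh z)

theorem stableTF_C (c : ℝ) : StableTF (RatFunc.C c) := by
  simp [StableTF]

theorem stableTF_zero : StableTF 0 := by
  simpa using stableTF_C 0

theorem StableTF.add {f g : TF} (hf : StableTF f) (hg : StableTF g) : StableTF (f + g) :=
  hf.of_denom_dvd_mul hg (RatFunc.denom_add_dvd f g)

theorem StableTF.mul {f g : TF} (hf : StableTF f) (hg : StableTF g) : StableTF (f * g) :=
  hf.of_denom_dvd_mul hg (RatFunc.denom_mul_dvd f g)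

theorem stableTF_sum {ι : Type*} (s : Finset ι) {f : ι → TF} (hf : ∀ i ∈ s, StableTF (f i)) :
    StableTF (∑ i ∈ s, f i) :=
  Finset.sum_induction f _ (fun _ _ => .add) stableTF_zero hf

theorem stableTF_mul_apply {m n k : ℕ} {A : TMat m n} {B : TMat n k}
    (hA : ∀ i j, StableTF (A i j)) (hB : ∀ i j, StableTF (B i j)) (i : Fin m) (j : Fin k) :
    StableTF ((A * B) i j) := by
  rw [Matrix.mul_apply]
  exact stableTF_sum _ fun l _ => (hA i l).mul (hB l j)

theorem memRHinfTF_C (c : ℝ) : MemRHinfTF (RatFunc.C c) := ⟨properTF_C c, stableTF_C c⟩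

theorem memRHinfTF_zero : MemRHinfTF 0 := by
  simpa using memRHinfTF_C 0

theorem MemRHinfTF.add {f g : TF} (hf : MemRHinfTF f) (hg : MemRHinfTF g) :
    MemRHinfTF (f + g) :=
  ⟨hf.1.add hg.1, hf.2.add hg.2⟩

theorem MemRHinfTF.mul {f g : TF} (hf : MemRHinfTF f) (hg : MemRHinfTF g) :
    MemRHinfTF (f * g) :=
  ⟨hf.1.mul hg.1, hf.2.mul hg.2⟩

theorem memRHinfTF_sum {ι : Type*} (s : Finset ι) {f : ι → TF}
    (hf : ∀ i ∈ s, MemRHinfTF (f i)) : MemRHinfTF (∑ i ∈ s, f i) :=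
  Finset.sum_induction f _ (fun _ _ => .add) memRHinfTF_zero hf

section MatrixLevel

variable {m n k : ℕ} {A : TMat m n}

theorem memRHinf_rmap (X : Matrix (Fin m) (Fin n) ℝ) : MemRHinf (rmap X) :=
  fun _ _ => memRHinfTF_C _

theorem MemRHinf.add {B : TMat m n} (hA : MemRHinf A) (hB : MemRHinf B) : MemRHinf (A + B) :=
  fun i j => (hA i j).add (hB i j)

theorem StrictlyProper.add {B : TMat m n} (hA : StrictlyProper A) (hB : StrictlyProper B) :
    StrictlyProper (A + B) :=
  fun i j => (hA i j).add (hB i j)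

theorem MemRHinf.mul {B : TMat n k} (hA : MemRHinf A) (hB : MemRHinf B) : MemRHinf (A * B) :=
  fun i j => by
    rw [Matrix.mul_apply]
    exact memRHinfTF_sum _ fun l _ => (hA i l).mul (hB l j)

theorem StrictlyProper.mul_memRHinf {B : TMat n k} (hA : StrictlyProper A) (hB : MemRHinf B) :
    StrictlyProper (A * B) :=
  fun i j => by
    rw [Matrix.mul_apply]
    exact strictlyProperTF_sum _ fun l _ => (hA i l).mul_properTF (hB l j).1

theorem MemRHinf.mul_strictlyProper {B : TMat n k} (hA : MemRHinf A) (hB : StrictlyProper B) :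
    StrictlyProper (A * B) :=
  fun i j => by
    rw [Matrix.mul_apply]
    exact strictlyProperTF_sum _ fun l _ => (hA i l).1.mul_strictlyProperTF (hB l j)

theorem MemRHinf.sMulTF {c : TF} (hc : MemRHinfTF c) (hA : MemRHinf A) :
    MemRHinf (sMulTF c A) :=
  fun i j => hc.mul (hA i j)

theorem StrictlyProper.sMulTF {c : TF} (hc : ProperTF c) (hA : StrictlyProper A) :
    StrictlyProper (sMulTF c A) :=
  fun i j => hc.mul_strictlyProperTF (hA i j)

end MatrixLevel

theorem StableTF.eval₂_denom_ne_zero {f : TF} (hf : StableTF f) {z : ℂ} (hz : 1 ≤ ‖z‖) :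
    f.denom.eval₂ (algebraMap ℝ ℂ) z ≠ 0 := by
  rw [eval₂_eq_eval_map]
  exact fun h => (hf z h).not_ge hz

theorem evalTF_eq_eval (f : TF) (z : ℂ) : evalTF f z = RatFunc.eval (algebraMap ℝ ℂ) z f := by
  simp [evalTF, RatFunc.eval, eval₂_eq_eval_map]

theorem evalTF_C (c : ℝ) (z : ℂ) : evalTF (RatFunc.C c) z = c := by
  simp [evalTF_eq_eval]

theorem evalTF_add {f g : TF} (hf : StableTF f) (hg : StableTF g) {z : ℂ} (hz : 1 ≤ ‖z‖) :
    evalTF (f + g) z = evalTF f z + evalTF g z := by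
  simp only [evalTF_eq_eval]
  exact RatFunc.eval_add _ _ (hf.eval₂_denom_ne_zero hz) (hg.eval₂_denom_ne_zero hz)

theorem evalTF_mul {f g : TF} (hf : StableTF f) (hg : StableTF g) {z : ℂ} (hz : 1 ≤ ‖z‖) :
    evalTF (f * g) z = evalTF f z * evalTF g z := by
  simp only [evalTF_eq_eval]
  exact RatFunc.eval_mul _ _ (hf.eval₂_denom_ne_zero hz) (hg.eval₂_denom_ne_zero hz)

theorem evalTF_sum {ι : Type*} (s : Finset ι) {f : ι → TF} (hf : ∀ i ∈ s, StableTF (f i))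
    {z : ℂ} (hz : 1 ≤ ‖z‖) : evalTF (∑ i ∈ s, f i) z = ∑ i ∈ s, evalTF (f i) z := by
  classical
  induction s using Finset.induction_on with
  | empty => simpa using evalTF_C 0 z
  | insert a s ha ih =>
    rw [Finset.forall_mem_insert] at hf
    rw [Finset.sum_insert ha, Finset.sum_insert ha,
      evalTF_add hf.1 (stableTF_sum s hf.2) hz, ih hf.2]

theorem evalTF_one_sub {h : TF} (hh : StableTF h) {z : ℂ} (hz : 1 ≤ ‖z‖) :
    evalTF (1 - h) z = 1 - evalTF h z := by
  have hneg : -h = RatFunc.C (-1) * h := by simp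
  rw [sub_eq_add_neg, ← map_one RatFunc.C, hneg, evalTF_add (stableTF_C 1)
    ((stableTF_C _).mul hh) hz, evalTF_mul (stableTF_C _) hh hz, evalTF_C, evalTF_C]
  push_cast
  ring

theorem evalMat_mul {m n k : ℕ} {A : TMat m n} {B : TMat n k} (hA : ∀ i j, StableTF (A i j))
    (hB : ∀ i j, StableTF (B i j)) {z : ℂ} (hz : 1 ≤ ‖z‖) :
    evalMat (A * B) z = evalMat A z * evalMat B z := by
  ext i j
  simp only [evalMat, Matrix.of_apply, Matrix.mul_apply]
  rw [evalTF_sum _ (fun l _ => (hA i l).mul (hB l j)) hz]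
  exact Finset.sum_congr rfl fun l _ => evalTF_mul (hA i l) (hB l j) hz

theorem evalMat_rmap {m n : ℕ} (X : Matrix (Fin m) (Fin n) ℝ) (z : ℂ) :
    evalMat (rmap X) z = X.map (↑) := by
  ext i j
  exact evalTF_C _ z

theorem continuousOn_evalTF {f : TF} (hf : StableTF f) :
    ContinuousOn (evalTF f) {z | 1 ≤ ‖z‖} :=
  (Polynomial.continuous _).continuousOn.div (Polynomial.continuous _).continuousOn
    fun _ hz => by simpa [eval₂_eq_eval_map] using hf.eval₂_denom_ne_zero hz

section HInfNorm

open Matrix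

theorem continuous_specNorm {m n : ℕ} :
    Continuous (specNorm : Matrix (Fin m) (Fin n) ℂ → ℝ) :=
  have : Continuous fun M : Matrix (Fin m) (Fin n) ℂ =>
      LinearMap.toContinuousLinearMap (toEuclideanLin M) :=
    LinearMap.continuous_of_finiteDimensional
      ((LinearMap.toContinuousLinearMap : _ ≃ₗ[ℂ] (EuclideanSpace ℂ (Fin n) →L[ℂ] _)).toLinearMap
        ∘ₗ (toEuclideanLin : Matrix (Fin m) (Fin n) ℂ ≃ₗ[ℂ] _).toLinearMap)
  this.norm

theorem specNorm_evalMat_le_hinfNorm {m n : ℕ} {F : TMat m n} (hF : ∀ i j, StableTF (F i j))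
    {z : ℂ} (hz : ‖z‖ = 1) : specNorm (evalMat F z) ≤ hinfNorm F := by
  have hsphere : Metric.sphere (0 : ℂ) 1 ⊆ {z | 1 ≤ ‖z‖} := fun w hw => by simp_all
  have hcont : ContinuousOn (fun w => specNorm (evalMat F w)) (Metric.sphere 0 1) :=
    continuous_specNorm.comp_continuousOn <| continuousOn_pi.2 fun i => continuousOn_pi.2
      fun j => (continuousOn_evalTF (hF i j)).mono hsphere
  have hset : {x | ∃ w : ℂ, ‖w‖ = 1 ∧ x = specNorm (evalMat F w)} =
      (fun w => specNorm (evalMat F w)) '' Metric.sphere 0 1 := by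
    ext x
    simp [eq_comm]
  rw [hinfNorm, hset]
  exact le_csSup ((isCompact_sphere 0 1).image_of_continuousOn hcont).bddAbove
    ⟨z, by simpa using hz, rfl⟩

theorem specNorm_vecMulVec_star {𝕜 : Type} [RCLike 𝕜] {m n : ℕ} (x : EuclideanSpace 𝕜 (Fin m))
    (y : EuclideanSpace 𝕜 (Fin n)) : specNorm (vecMulVec x (star y)) = ‖x‖ * ‖y‖ := by
  rw [specNorm, ← InnerProductSpace.symm_toEuclideanLin_rankOne x y,
    LinearEquiv.apply_symm_apply, ← InnerProductSpace.norm_rankOne (𝕜 := 𝕜) x y]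
  rfl

theorem norm_dotProduct_le_specNorm_vecMulVec {𝕜 : Type} [RCLike 𝕜] {n : ℕ} (v d : Fin n → 𝕜) :
    ‖d ⬝ᵥ v‖ ≤ specNorm (vecMulVec v d) := by
  have h := specNorm_vecMulVec_star (WithLp.toLp 2 v) (WithLp.toLp 2 (star d))
  rw [WithLp.ofLp_toLp, WithLp.ofLp_toLp, star_star] at h
  have hi : d ⬝ᵥ v = inner 𝕜 (WithLp.toLp 2 (star d)) (WithLp.toLp 2 v) := by
    rw [EuclideanSpace.inner_toLp_toLp, star_star, dotProduct_comm]
  rw [h, mul_comm, hi]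
  exact norm_inner_le_norm _ _

theorem norm_evalTF_rowVec_mul_le_hinfNorm {n : ℕ} {N : TMat n 1}
    (hN : ∀ i j, StableTF (N i j)) (δ : Fin n → ℝ) {z : ℂ} (hz : ‖z‖ = 1) :
    ‖evalTF ((rmap (rowVec δ) * N) 0 0) z‖ ≤ hinfNorm (N * rmap (rowVec δ)) := by
  have hz' : 1 ≤ ‖z‖ := hz.ge
  have hδ : ∀ i j, StableTF (rmap (rowVec δ) i j) := fun _ _ => stableTF_C _
  set v : Fin n → ℂ := fun i => evalTF (N i 0) z
  set d : Fin n → ℂ := fun j => δ j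
  have hdot : evalTF ((rmap (rowVec δ) * N) 0 0) z = d ⬝ᵥ v := by
    change evalMat (rmap (rowVec δ) * N) z 0 0 = _
    rw [evalMat_mul hδ hN hz', evalMat_rmap, Matrix.mul_apply, dotProduct]
    simp [rowVec, v, d, evalMat]
  have houter : evalMat (N * rmap (rowVec δ)) z = vecMulVec v d := by
    rw [evalMat_mul hN hδ hz', evalMat_rmap]
    ext i j
    simp [vecMulVec, Matrix.mul_apply, rowVec, v, d, evalMat]
  calc ‖evalTF ((rmap (rowVec δ) * N) 0 0) z‖ ≤ specNorm (vecMulVec v d) := by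
        rw [hdot]; exact norm_dotProduct_le_specNorm_vecMulVec v d
    _ ≤ hinfNorm (N * rmap (rowVec δ)) :=
        houter ▸ specNorm_evalMat_le_hinfNorm (stableTF_mul_apply hN hδ) hz

end HInfNorm

theorem eval_reverse_eq_mul_pow {p : ℂ[X]} {w : ℂ} (hw : w ≠ 0) :
    p.reverse.eval w = p.eval w⁻¹ * w ^ p.natDegree := by
  let := invertibleOfNonzero (inv_ne_zero hw)
  have h := eval₂_reverse_mul_pow (RingHom.id ℂ) w⁻¹ p
  rw [invOf_eq_inv, inv_inv, eval₂_id, eval₂_id] at h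
  rw [← h, mul_assoc, ← mul_pow, inv_mul_cancel₀ hw, one_pow, mul_one]

/-- `w ↦ f(1/w)`, written so that it stays holomorphic at `w = 0` when `f` is proper. -/
def reversedTF (f : TF) (w : ℂ) : ℂ :=
  w ^ (f.denom.natDegree - f.num.natDegree) * (f.num.map (algebraMap ℝ ℂ)).reverse.eval w /
    (f.denom.map (algebraMap ℝ ℂ)).reverse.eval w

theorem reversedTF_eq_evalTF_inv {f : TF} (hf : ProperTF f) {w : ℂ} (hw : w ≠ 0) :
    reversedTF f w = evalTF f w⁻¹ := by
  rw [reversedTF, evalTF, eval_reverse_eq_mul_pow hw, eval_reverse_eq_mul_pow hw,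
    natDegree_map, natDegree_map, mul_left_comm, ← pow_add,
    Nat.sub_add_cancel (natDegree_le_natDegree hf), mul_div_mul_right _ _ (pow_ne_zero _ hw)]

theorem StableTF.differentiableOn_reversedTF {f : TF} (hf : StableTF f) :
    DifferentiableOn ℂ (reversedTF f) (Metric.closedBall 0 1) := by
  refine ((differentiable_pow _).mul (Polynomial.differentiable _)).differentiableOn.div
    (Polynomial.differentiable _).differentiableOn fun w hw => ?_
  rcases eq_or_ne w 0 with rfl | hw0
  · rw [← coeff_zero_eq_eval_zero, coeff_zero_reverse, leadingCoeff_ne_zero,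
      Polynomial.map_ne_zero_iff (algebraMap ℝ ℂ).injective]
    exact f.denom_ne_zero
  have hw1 : 1 ≤ ‖w⁻¹‖ := by
    rw [norm_inv]
    exact one_le_inv₀ (norm_pos_iff.2 hw0) |>.2 (by simpa using hw)
  rw [eval_reverse_eq_mul_pow hw0, ← eval₂_eq_eval_map]
  exact mul_ne_zero (hf.eval₂_denom_ne_zero hw1) (pow_ne_zero _ hw0)

theorem MemRHinfTF.norm_evalTF_le {f : TF} (hf : MemRHinfTF f) {C : ℝ}
    (hC : ∀ z : ℂ, ‖z‖ = 1 → ‖evalTF f z‖ ≤ C) {z : ℂ} (hz : 1 ≤ ‖z‖) : ‖evalTF f z‖ ≤ C := by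
  have hz0 : z ≠ 0 := norm_pos_iff.1 (zero_lt_one.trans_le hz)
  rw [← inv_inv z, ← reversedTF_eq_evalTF_inv hf.1 (inv_ne_zero hz0)]
  refine Complex.norm_le_of_forall_mem_frontier_norm_le Metric.isBounded_ball
    (hf.2.differentiableOn_reversedTF.diffContOnCl_ball subset_rfl) (fun w hw => ?_) ?_
  · rw [frontier_ball 0 one_ne_zero, mem_sphere_zero_iff_norm] at hw
    rw [reversedTF_eq_evalTF_inv hf.1 (norm_ne_zero_iff.1 (hw.symm ▸ one_ne_zero))]
    exact hC _ (by rw [norm_inv, hw, inv_one])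
  · rw [closure_ball 0 one_ne_zero, mem_closedBall_zero_iff, norm_inv]
    exact inv_le_one_of_one_le₀ hz

theorem properTF_inv_one_sub {h : TF} (hh : StrictlyProperTF h) : ProperTF (1 - h)⁻¹ := by
  rw [properTF_iff_intDegree_nonpos, RatFunc.intDegree_inv, neg_nonpos]
  rcases strictlyProperTF_iff.1 hh with rfl | hneg
  · simp
  have h0 : h ≠ 0 := fun h0 => by simp [h0] at hneg
  have := RatFunc.intDegree_add_le h0 (by simp : 1 - h + h ≠ 0)
  rw [sub_add_cancel, RatFunc.intDegree_one] at this
  exact (le_max_iff.1 this).resolve_right hneg.not_ge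

theorem stableTF_inv {f : TF} (hf : ∀ z : ℂ, 1 ≤ ‖z‖ → evalTF f z ≠ 0) : StableTF f⁻¹ := by
  rcases eq_or_ne f 0 with rfl | hf0
  · simpa using stableTF_zero
  intro z hz
  by_contra hlt
  apply hf z (not_lt.1 hlt)
  rw [← eval₂_eq_eval_map] at hz
  rw [evalTF, ← eval₂_eq_eval_map,
    eval₂_eq_zero_of_dvd_of_eval₂_eq_zero _ _ (RatFunc.denom_inv_dvd hf0) hz, zero_div]

theorem memRHinfTF_inv_one_sub {h : TF} (hsp : StrictlyProperTF h) (hst : StableTF h) {C : ℝ}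
    (hC1 : C < 1) (hC : ∀ z : ℂ, ‖z‖ = 1 → ‖evalTF h z‖ ≤ C) : MemRHinfTF (1 - h)⁻¹ := by
  refine ⟨properTF_inv_one_sub hsp, stableTF_inv fun z hz h0 => ?_⟩
  have hle := MemRHinfTF.norm_evalTF_le ⟨hsp.properTF, hst⟩ hC hz
  rw [evalTF_one_sub hst hz, sub_eq_zero] at h0
  rw [← h0, norm_one] at hle
  exact hle.not_gt hC1

theorem fin_one_mul_eq_smul {α : Type*} [CommRing α] {k : ℕ} (Z : Matrix (Fin 1) (Fin 1) α)
    (Y : Matrix (Fin 1) (Fin k) α) : Z * Y = Z 0 0 • Y := by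
  ext i j
  rw [Matrix.mul_apply, Fin.sum_univ_one, Matrix.smul_apply, smul_eq_mul, Subsingleton.elim i 0]

theorem sMulTF_eq_smul {m n : ℕ} (c : TF) (X : TMat m n) : sMulTF c X = c • X := rfl

theorem rmap_add {m n : ℕ} (X Y : Matrix (Fin m) (Fin n) ℝ) : rmap (X + Y) = rmap X + rmap Y :=
  Matrix.map_add _ (map_add RatFunc.C) X Y

theorem rowVec_add {n : ℕ} (a b : Fin n → ℝ) : rowVec (a + b) = rowVec a + rowVec b := rfl

section ClosedLoop

variable {n p q : ℕ}

theorem controller_mul_eq {Θ : Response n p q} {Λ : TMat n n} {C : TMat q n}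
    (hR : IsUnit Θ.R.det) (h3 : Θ.R * Λ - Θ.N * C = 1) (h4 : Θ.M * Λ - Θ.L * C = 0) :
    controller Θ * C = Θ.M * Θ.R⁻¹ :=
  calc controller Θ * C = Θ.L * C - Θ.M * Θ.R⁻¹ * (Θ.N * C) := by
        rw [controller, Matrix.sub_mul, Matrix.mul_assoc _ Θ.N]
    _ = Θ.M * Λ - Θ.M * Θ.R⁻¹ * (Θ.R * Λ - 1) := by
        rw [sub_eq_zero.1 h4, ← h3, sub_sub_cancel]
    _ = Θ.M * Θ.R⁻¹ := by
        rw [Matrix.mul_sub, Matrix.mul_one, ← Matrix.mul_assoc,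
          Matrix.nonsing_inv_mul_cancel_right Θ.R _ hR]
        abel

/-- The Sherman–Morrison step: the term `K D N D X` is `(D N) • K D X` because `D N` is `1 × 1`,
and it merges with `K D X` since `1 + s (D N) = s`. -/
theorem controller_mul_add_smul {Θ : Response n p 1} {C D : TMat 1 n} {s : TF}
    (hKC : controller Θ * C = Θ.M * Θ.R⁻¹) (hs : 1 + s * (D * Θ.N) 0 0 = s) {k : ℕ}
    (X : TMat n k) :
    controller Θ * (C + D) * (X + s • (Θ.N * D * X)) = Θ.M * Θ.R⁻¹ * X + s • (Θ.L * D * X) := by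
  set K := controller Θ
  have hDN : D * Θ.N * (D * X) = (D * Θ.N) 0 0 • (D * X) := fin_one_mul_eq_smul _ _
  have hL : Θ.L = Θ.M * Θ.R⁻¹ * Θ.N + K := by simp only [K, controller]; abel
  calc K * (C + D) * (X + s • (Θ.N * D * X))
      = K * C * X + s • (K * C * Θ.N * D * X) + K * D * X + s • (K * (D * Θ.N * (D * X))) := by
        simp only [Matrix.mul_add, Matrix.add_mul, Matrix.mul_smul, Matrix.mul_assoc, smul_add]
        abel
    _ = Θ.M * Θ.R⁻¹ * X + s • (Θ.M * Θ.R⁻¹ * Θ.N * D * X) +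
          (1 + s * (D * Θ.N) 0 0) • (K * D * X) := by
        rw [hKC, hDN, Matrix.mul_smul, add_smul, one_smul, mul_smul, Matrix.mul_assoc K D X]; abel
    _ = Θ.M * Θ.R⁻¹ * X + s • (Θ.L * D * X) := by
        rw [hs, hL, Matrix.add_mul, Matrix.add_mul, smul_add]; abel

theorem achieves_smPerturb {A : Matrix (Fin n) (Fin n) ℝ} {B : Matrix (Fin n) (Fin 1) ℝ}
    {C : Matrix (Fin 1) (Fin n) ℝ} {δ : Fin n → ℝ} {Θ : Response n 1 1}
    (h1 : zIA A * Θ.R - rmap B * Θ.M = 1) (h2 : zIA A * Θ.N - rmap B * Θ.L = 0)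
    (h3 : Θ.R * zIA A - Θ.N * rmap C = 1) (h4 : Θ.M * zIA A - Θ.L * rmap C = 0)
    (hR : IsUnit Θ.R.det) (hδN : (rmap (rowVec δ) * Θ.N) 0 0 ≠ 1) :
    Achieves A B (C + rowVec δ) (controller Θ) (smPerturb δ Θ) := by
  set D := rmap (rowVec δ)
  set s := (1 - (D * Θ.N) 0 0)⁻¹
  have hs : 1 + s * (D * Θ.N) 0 0 = s :=
    calc 1 + s * (D * Θ.N) 0 0 = s * (1 - (D * Θ.N) 0 0) + s * (D * Θ.N) 0 0 := by
          rw [inv_mul_cancel₀ (sub_ne_zero.2 hδN.symm)]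
      _ = s := by ring
  have hKC := controller_mul_eq hR h3 h4
  have hΛN : zIA A * Θ.N = rmap B * Θ.L := sub_eq_zero.1 h2
  have hΛ : ∀ {k : ℕ} (Y : TMat 1 k), zIA A * (Θ.N * Y) = rmap B * (Θ.L * Y) := fun Y => by
    rw [← Matrix.mul_assoc, hΛN, Matrix.mul_assoc]
  simp only [Achieves, smPerturb, sMulTF_eq_smul, rmap_add]
  refine ⟨?_, ?_, ?_, ?_⟩
  · rw [Matrix.mul_add, Matrix.mul_smul, Matrix.mul_assoc, hΛ, sub_eq_iff_eq_add.1 h1,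
      Matrix.mul_add, Matrix.mul_smul, Matrix.mul_assoc Θ.L]
    abel
  · rw [Matrix.mul_add, Matrix.mul_smul, Matrix.mul_assoc, hΛ, hΛN,
      Matrix.mul_add, Matrix.mul_smul, Matrix.mul_assoc Θ.L]
  · rw [controller_mul_add_smul hKC hs, Matrix.nonsing_inv_mul_cancel_right Θ.R _ hR]
  · rw [controller_mul_add_smul hKC hs, controller]
    abel

end ClosedLoop

theorem SLSStable.smPerturb {n : ℕ} {δ : Fin n → ℝ} {Θ : Response n 1 1} (hΘ : SLSStable Θ)
    (hs : MemRHinfTF (1 - (rmap (rowVec δ) * Θ.N) 0 0)⁻¹) : SLSStable (smPerturb δ Θ) := by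
  obtain ⟨spR, spM, spN, hR, hM, hN, hL⟩ := hΘ
  have spNδ : StrictlyProper (Θ.N * rmap (rowVec δ)) := spN.mul_memRHinf (memRHinf_rmap _)
  have hNδ : MemRHinf (Θ.N * rmap (rowVec δ)) := hN.mul (memRHinf_rmap _)
  have hLδ : MemRHinf (Θ.L * rmap (rowVec δ)) := hL.mul (memRHinf_rmap _)
  exact ⟨spR.add ((spNδ.mul_memRHinf hR).sMulTF hs.1),
    spM.add ((hLδ.mul_strictlyProper spR).sMulTF hs.1),
    spN.add ((spNδ.mul_memRHinf hN).sMulTF hs.1),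
    hR.add ((hNδ.mul hR).sMulTF hs), hM.add ((hLδ.mul hR).sMulTF hs),
    hN.add ((hNδ.mul hN).sMulTF hs), hL.add ((hLδ.mul hN).sMulTF hs)⟩

end SLS

/-- FIR specialization. If `Θ̃` satisfies the SLS constraints for the
estimated plant `(Z, e₁, g̃ᵀ)` and `‖Ñδᵀ‖ < 1` (H∞ norm, `δ = g − g̃`), then the
controller `K̃ = L̃ − M̃R̃⁻¹Ñ` internally stabilizes the true plant `(Z, e₁, gᵀ)` and
achieves the Sherman–Morrison perturbed closed-loop response `Θ̂`. -/
theorem statement_7 (r : ℕ) (g gt : Fin (r - 1) → ℝ) (Θ : Response (r - 1) 1 1)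
    (hsls : SLSConstraints (shiftMat (r - 1)) (e1 (r - 1)) (rowVec gt) Θ)
    (hR : IsUnit Θ.R.det)
    (hsmall : hinfNorm (Θ.N * rmap (rowVec (g - gt))) < 1) :
    InternallyStabilizes (shiftMat (r - 1)) (e1 (r - 1)) (rowVec g) (controller Θ) ∧
      Achieves (shiftMat (r - 1)) (e1 (r - 1)) (rowVec g) (controller Θ)
        (smPerturb (g - gt) Θ) := by
  obtain ⟨h1, h2, h3, h4, hstab⟩ := hsls
  have ⟨_, _, spN, _, _, memN, _⟩ := hstab
  have hN : ∀ i j, StableTF (Θ.N i j) := fun i j => (memN i j).2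
  set η := (rmap (rowVec (g - gt)) * Θ.N) 0 0
  have hηsp : StrictlyProperTF η := (memRHinf_rmap _).mul_strictlyProper spN 0 0
  have hηst : StableTF η := stableTF_mul_apply (fun _ _ => stableTF_C _) hN 0 0
  have hinv : MemRHinfTF (1 - η)⁻¹ := memRHinfTF_inv_one_sub hηsp hηst hsmall
    fun z hz => norm_evalTF_rowVec_mul_le_hinfNorm hN (g - gt) hz
  have hach : Achieves (shiftMat (r - 1)) (e1 (r - 1)) (rowVec g) (controller Θ)
      (smPerturb (g - gt) Θ) := by
    have := achieves_smPerturb h1 h2 h3 h4 hR fun hη1 => not_strictlyProperTF_one (hη1 ▸ hηsp)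
    rwa [← rowVec_add, add_sub_cancel] at this
  exact ⟨⟨_, hach, hstab.smPerturb hinv⟩, hach⟩
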